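/- arXiv:1409.2427 — 3 statements merged into one kernel-verified Lean document; each statement's English description precedes it below -/
import Mathlib

section
/- Let x : ℂ∖{0} → ℝ⁶ be defined by x = ( (i/4)(z−z̄), −(1/4)(z+z̄), −(i/2)(1/z̄ − 1/z), (1/2)(1/z̄ + 1/z), (i/6)(z²−z̄²), −(1/6)(z²+z̄²) ) (each component is real). Then with r² = |z|², the following identities hold: x·x = (1/r²)(1 + r⁴/4 + r⁶/9), x_z·x = −(1/(2zr²))(1 − r⁴/4 − 2r⁶/9), x_zz·x = z̄²(1/9 + 1/r⁶), and x_z·x_z̄ = (1/(2r⁴))(1 + r⁴/4 + 4r⁶/9), where x_z, x_zz are Wirtinger derivatives and · is the ℂ-bilinear dot product on ℂ⁶. -/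
open Finset Complex

/-- The ℂ-bilinear dot product on ℂⁿ. -/
noncomputable def dotC {n : ℕ} (a b : Fin n → ℂ) : ℂ := ∑ i, a i * b i

/-- The Wirtinger derivative ∂/∂z. -/
noncomputable def wderivZ {E : Type*} [NormedAddCommGroup E] [NormedSpace ℂ E]
    (f : ℂ → E) (z : ℂ) : E :=
  (2 : ℂ)⁻¹ • (fderiv ℝ f z 1 - Complex.I • fderiv ℝ f z Complex.I)

/-- The Wirtinger derivative ∂/∂z̄. -/
noncomputable def wderivZbar {E : Type*} [NormedAddCommGroup E] [NormedSpace ℂ E]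
    (f : ℂ → E) (z : ℂ) : E :=
  (2 : ℂ)⁻¹ • (fderiv ℝ f z 1 + Complex.I • fderiv ℝ f z Complex.I)

/-- The totally isotropic minimal surface of Example 1 in ℝ⁶ ⊂ ℂ⁶. -/
noncomputable def exMin (z : ℂ) : Fin 6 → ℂ :=
  ![ (I / 4) * (z - (starRingEnd ℂ) z),
     -(1 / 4) * (z + (starRingEnd ℂ) z),
     -(I / 2) * (1 / (starRingEnd ℂ) z - 1 / z),
     (1 / 2) * (1 / (starRingEnd ℂ) z + 1 / z),
     (I / 6) * (z ^ 2 - (starRingEnd ℂ z) ^ 2),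
     -(1 / 6) * (z ^ 2 + (starRingEnd ℂ z) ^ 2) ]

section aux

lemma hasF_ab {g : ℂ → ℂ} {g' : ℂ} (a b : ℂ) {z : ℂ} (hg : HasDerivAt g g' z) :
    HasFDerivAt (fun w => a * g w + b * (starRingEnd ℂ) (g w))
      (a • (ContinuousLinearMap.smulRight (1 : ℂ →L[ℂ] ℂ) g').restrictScalars ℝ +
       b • (Complex.conjCLE.toContinuousLinearMap.comp
            ((ContinuousLinearMap.smulRight (1 : ℂ →L[ℂ] ℂ) g').restrictScalars ℝ))) z := by
  have h1 : HasFDerivAt g ((ContinuousLinearMap.smulRight (1 : ℂ →L[ℂ] ℂ) g').restrictScalars ℝ) z :=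
    hg.hasFDerivAt.restrictScalars ℝ
  have h2 := (Complex.conjCLE.hasFDerivAt.comp z h1)
  have h2' : HasFDerivAt (fun w => (starRingEnd ℂ) (g w))
      (Complex.conjCLE.toContinuousLinearMap.comp
        ((ContinuousLinearMap.smulRight (1 : ℂ →L[ℂ] ℂ) g').restrictScalars ℝ)) z := by
    exact h2
  exact (h1.const_mul a).add (h2'.const_mul b)

lemma wz_ab {g : ℂ → ℂ} {g' : ℂ} (a b : ℂ) {z : ℂ} (hg : HasDerivAt g g' z) :
    wderivZ (fun w => a * g w + b * (starRingEnd ℂ) (g w)) z = a * g' := by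
  unfold wderivZ
  rw [(hasF_ab a b hg).fderiv]
  simp [Complex.conjCLE_apply, map_mul, Complex.conj_I, smul_eq_mul]
  ring_nf
  simp only [Complex.I_sq]
  ring

lemma wzbar_ab {g : ℂ → ℂ} {g' : ℂ} (a b : ℂ) {z : ℂ} (hg : HasDerivAt g g' z) :
    wderivZbar (fun w => a * g w + b * (starRingEnd ℂ) (g w)) z
      = b * (starRingEnd ℂ) g' := by
  unfold wderivZbar
  rw [(hasF_ab a b hg).fderiv]
  simp [Complex.conjCLE_apply, map_mul, Complex.conj_I, smul_eq_mul]
  ring_nf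
  simp only [Complex.I_sq]
  ring

lemma wderivZ_apply {n : ℕ} (f : ℂ → Fin n → ℂ) (z : ℂ)
    (h : ∀ i, DifferentiableAt ℝ (fun w => f w i) z) (i : Fin n) :
    wderivZ f z i = wderivZ (fun w => f w i) z := by
  unfold wderivZ
  rw [fderiv_pi h]
  simp

lemma wderivZbar_apply {n : ℕ} (f : ℂ → Fin n → ℂ) (z : ℂ)
    (h : ∀ i, DifferentiableAt ℝ (fun w => f w i) z) (i : Fin n) :
    wderivZbar f z i = wderivZbar (fun w => f w i) z := by
  unfold wderivZbar
  rw [fderiv_pi h]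
  simp

lemma wderivZ_congr {E : Type*} [NormedAddCommGroup E] [NormedSpace ℂ E]
    {f g : ℂ → E} {z : ℂ} (h : f =ᶠ[nhds z] g) : wderivZ f z = wderivZ g z := by
  unfold wderivZ
  rw [h.fderiv_eq]

lemma wz_const {E : Type*} [NormedAddCommGroup E] [NormedSpace ℂ E] (c : E) (z : ℂ) :
    wderivZ (fun _ => c) z = 0 := by
  unfold wderivZ
  simp

end aux

section explicitDerivs

noncomputable def xz (z : ℂ) : Fin 6 → ℂ :=
  ![I/4, -(1/4 : ℂ), -(I/2)/z^2, -(1/2 : ℂ)/z^2, (I/3)*z, -(1/3 : ℂ)*z]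

noncomputable def xzbar (z : ℂ) : Fin 6 → ℂ :=
  ![-(I/4), -(1/4 : ℂ), (I/2)/(starRingEnd ℂ z)^2, -(1/2 : ℂ)/(starRingEnd ℂ z)^2,
    -(I/3)*(starRingEnd ℂ z), -(1/3 : ℂ)*(starRingEnd ℂ z)]

noncomputable def xzz (z : ℂ) : Fin 6 → ℂ :=
  ![0, 0, I/z^3, 1/z^3, I/3, -(1/3 : ℂ)]

-- entry lemmas
lemma eM0 (z : ℂ) : exMin z 0 = (I / 4) * (z - (starRingEnd ℂ) z) := rfl
lemma eM1 (z : ℂ) : exMin z 1 = -(1 / 4) * (z + (starRingEnd ℂ) z) := rfl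
lemma eM2 (z : ℂ) : exMin z 2 = -(I / 2) * (1 / (starRingEnd ℂ) z - 1 / z) := rfl
lemma eM3 (z : ℂ) : exMin z 3 = (1 / 2) * (1 / (starRingEnd ℂ) z + 1 / z) := rfl
lemma eM4 (z : ℂ) : exMin z 4 = (I / 6) * (z ^ 2 - (starRingEnd ℂ z) ^ 2) := rfl
lemma eM5 (z : ℂ) : exMin z 5 = -(1 / 6) * (z ^ 2 + (starRingEnd ℂ z) ^ 2) := rfl
lemma xz0 (z : ℂ) : xz z 0 = I/4 := rfl
lemma xz1 (z : ℂ) : xz z 1 = -(1/4 : ℂ) := rfl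
lemma xz2 (z : ℂ) : xz z 2 = -(I/2)/z^2 := rfl
lemma xz3 (z : ℂ) : xz z 3 = -(1/2 : ℂ)/z^2 := rfl
lemma xz4 (z : ℂ) : xz z 4 = (I/3)*z := rfl
lemma xz5 (z : ℂ) : xz z 5 = -(1/3 : ℂ)*z := rfl
lemma xb0 (z : ℂ) : xzbar z 0 = -(I/4) := rfl
lemma xb1 (z : ℂ) : xzbar z 1 = -(1/4 : ℂ) := rfl
lemma xb2 (z : ℂ) : xzbar z 2 = (I/2)/(starRingEnd ℂ z)^2 := rfl
lemma xb3 (z : ℂ) : xzbar z 3 = -(1/2 : ℂ)/(starRingEnd ℂ z)^2 := rfl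
lemma xb4 (z : ℂ) : xzbar z 4 = -(I/3)*(starRingEnd ℂ z) := rfl
lemma xb5 (z : ℂ) : xzbar z 5 = -(1/3 : ℂ)*(starRingEnd ℂ z) := rfl
lemma xzz0 (z : ℂ) : xzz z 0 = 0 := rfl
lemma xzz1 (z : ℂ) : xzz z 1 = 0 := rfl
lemma xzz2 (z : ℂ) : xzz z 2 = I/z^3 := rfl
lemma xzz3 (z : ℂ) : xzz z 3 = 1/z^3 := rfl
lemma xzz4 (z : ℂ) : xzz z 4 = I/3 := rfl
lemma xzz5 (z : ℂ) : xzz z 5 = -(1/3 : ℂ) := rfl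

-- rewrite forms of exMin components
lemma comp0 : (fun w : ℂ => exMin w 0) = fun w => (I/4) * w + (-(I/4)) * (starRingEnd ℂ) w := by
  funext w; rw [eM0]; ring
lemma comp1 : (fun w : ℂ => exMin w 1) = fun w => (-(1/4 : ℂ)) * w + (-(1/4 : ℂ)) * (starRingEnd ℂ) w := by
  funext w; rw [eM1]; ring
lemma comp2 : (fun w : ℂ => exMin w 2) = fun w => (I/2) * w⁻¹ + (-(I/2)) * (starRingEnd ℂ) w⁻¹ := by
  funext w; rw [eM2]; simp [map_inv₀]; ring
lemma comp3 : (fun w : ℂ => exMin w 3) = fun w => (1/2 : ℂ) * w⁻¹ + (1/2 : ℂ) * (starRingEnd ℂ) w⁻¹ := by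
  funext w; rw [eM3]; simp [map_inv₀]; ring
lemma comp4 : (fun w : ℂ => exMin w 4) = fun w => (I/6) * w^2 + (-(I/6)) * (starRingEnd ℂ) (w^2) := by
  funext w; rw [eM4]; simp [map_pow]; ring
lemma comp5 : (fun w : ℂ => exMin w 5) = fun w => (-(1/6 : ℂ)) * w^2 + (-(1/6 : ℂ)) * (starRingEnd ℂ) (w^2) := by
  funext w; rw [eM5]; simp [map_pow]; ring

lemma hd_id (z : ℂ) : HasDerivAt (fun w : ℂ => w) 1 z := hasDerivAt_id z

lemma hd_inv {z : ℂ} (hz : z ≠ 0) : HasDerivAt (fun w : ℂ => w⁻¹) (-(z^2)⁻¹) z := by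
  simpa using hasDerivAt_inv hz

lemma hd_sq (z : ℂ) : HasDerivAt (fun w : ℂ => w^2) (2*z) z := by
  simpa using hasDerivAt_pow 2 z

lemma diff_exMin {z : ℂ} (hz : z ≠ 0) :
    ∀ i, DifferentiableAt ℝ (fun w => exMin w i) z := by
  intro i
  fin_cases i
  · show DifferentiableAt ℝ (fun w => exMin w 0) z
    rw [comp0]; exact (hasF_ab _ _ (hd_id z)).differentiableAt
  · show DifferentiableAt ℝ (fun w => exMin w 1) z
    rw [comp1]; exact (hasF_ab _ _ (hd_id z)).differentiableAt
  · show DifferentiableAt ℝ (fun w => exMin w 2) z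
    rw [comp2]; exact (hasF_ab _ _ (hd_inv hz)).differentiableAt
  · show DifferentiableAt ℝ (fun w => exMin w 3) z
    rw [comp3]; exact (hasF_ab _ _ (hd_inv hz)).differentiableAt
  · show DifferentiableAt ℝ (fun w => exMin w 4) z
    rw [comp4]; exact (hasF_ab _ _ (hd_sq z)).differentiableAt
  · show DifferentiableAt ℝ (fun w => exMin w 5) z
    rw [comp5]; exact (hasF_ab _ _ (hd_sq z)).differentiableAt

lemma wz_exMin {z : ℂ} (hz : z ≠ 0) : wderivZ exMin z = xz z := by
  funext i
  rw [wderivZ_apply _ _ (diff_exMin hz)]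
  fin_cases i
  · show wderivZ (fun w => exMin w 0) z = xz z 0
    rw [comp0, wz_ab _ _ (hd_id z), xz0]; try ring
  · show wderivZ (fun w => exMin w 1) z = xz z 1
    rw [comp1, wz_ab _ _ (hd_id z), xz1]; try ring
  · show wderivZ (fun w => exMin w 2) z = xz z 2
    rw [comp2, wz_ab _ _ (hd_inv hz), xz2]; field_simp
  · show wderivZ (fun w => exMin w 3) z = xz z 3
    rw [comp3, wz_ab _ _ (hd_inv hz), xz3]; field_simp
  · show wderivZ (fun w => exMin w 4) z = xz z 4
    rw [comp4, wz_ab _ _ (hd_sq z), xz4]; ring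
  · show wderivZ (fun w => exMin w 5) z = xz z 5
    rw [comp5, wz_ab _ _ (hd_sq z), xz5]; ring

lemma wzbar_exMin {z : ℂ} (hz : z ≠ 0) : wderivZbar exMin z = xzbar z := by
  have hc : (starRingEnd ℂ) z ≠ 0 := by simpa using hz
  funext i
  rw [wderivZbar_apply _ _ (diff_exMin hz)]
  fin_cases i
  · show wderivZbar (fun w => exMin w 0) z = xzbar z 0
    rw [comp0, wzbar_ab _ _ (hd_id z), xb0]; simp
  · show wderivZbar (fun w => exMin w 1) z = xzbar z 1
    rw [comp1, wzbar_ab _ _ (hd_id z), xb1]; simp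
  · show wderivZbar (fun w => exMin w 2) z = xzbar z 2
    rw [comp2, wzbar_ab _ _ (hd_inv hz), xb2]; simp [map_pow]; field_simp
  · show wderivZbar (fun w => exMin w 3) z = xzbar z 3
    rw [comp3, wzbar_ab _ _ (hd_inv hz), xb3]; simp [map_pow]; field_simp
  · show wderivZbar (fun w => exMin w 4) z = xzbar z 4
    rw [comp4, wzbar_ab _ _ (hd_sq z), xb4]; simp [map_ofNat]; ring
  · show wderivZbar (fun w => exMin w 5) z = xzbar z 5
    rw [comp5, wzbar_ab _ _ (hd_sq z), xb5]; simp [map_ofNat]; ring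

-- components of xz in a*g + b*conj(g w) form (b = 0)
lemma xzc2 : (fun w : ℂ => xz w 2) = fun w => (-(I/2)) * (w^2)⁻¹ + (0:ℂ) * (starRingEnd ℂ) ((w^2)⁻¹) := by
  funext w; rw [xz2]; ring
lemma xzc3 : (fun w : ℂ => xz w 3) = fun w => (-(1/2:ℂ)) * (w^2)⁻¹ + (0:ℂ) * (starRingEnd ℂ) ((w^2)⁻¹) := by
  funext w; rw [xz3]; ring
lemma xzc4 : (fun w : ℂ => xz w 4) = fun w => (I/3) * w + (0:ℂ) * (starRingEnd ℂ) w := by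
  funext w; rw [xz4]; ring
lemma xzc5 : (fun w : ℂ => xz w 5) = fun w => (-(1/3:ℂ)) * w + (0:ℂ) * (starRingEnd ℂ) w := by
  funext w; rw [xz5]; ring
lemma xzc0 : (fun w : ℂ => xz w 0) = fun _ => I/4 := by funext w; rw [xz0]
lemma xzc1 : (fun w : ℂ => xz w 1) = fun _ => -(1/4 : ℂ) := by funext w; rw [xz1]

lemma hd_invsq {z : ℂ} (hz : z ≠ 0) : HasDerivAt (fun w : ℂ => (w^2)⁻¹) (-2/z^3) z := by
  have := ((hd_sq z).inv (pow_ne_zero 2 hz))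
  refine this.congr_deriv ?_
  rw [div_eq_div_iff (pow_ne_zero _ (pow_ne_zero 2 hz)) (pow_ne_zero 3 hz)]
  ring

lemma diff_xz {z : ℂ} (hz : z ≠ 0) : ∀ i, DifferentiableAt ℝ (fun w => xz w i) z := by
  intro i
  fin_cases i
  · show DifferentiableAt ℝ (fun w => xz w 0) z
    rw [xzc0]; exact differentiableAt_const _
  · show DifferentiableAt ℝ (fun w => xz w 1) z
    rw [xzc1]; exact differentiableAt_const _
  · show DifferentiableAt ℝ (fun w => xz w 2) z
    rw [xzc2]; exact (hasF_ab _ _ (hd_invsq hz)).differentiableAt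
  · show DifferentiableAt ℝ (fun w => xz w 3) z
    rw [xzc3]; exact (hasF_ab _ _ (hd_invsq hz)).differentiableAt
  · show DifferentiableAt ℝ (fun w => xz w 4) z
    rw [xzc4]; exact (hasF_ab _ _ (hd_id z)).differentiableAt
  · show DifferentiableAt ℝ (fun w => xz w 5) z
    rw [xzc5]; exact (hasF_ab _ _ (hd_id z)).differentiableAt

lemma wz_xz {z : ℂ} (hz : z ≠ 0) : wderivZ xz z = xzz z := by
  funext i
  rw [wderivZ_apply _ _ (diff_xz hz)]
  fin_cases i
  · show wderivZ (fun w => xz w 0) z = xzz z 0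
    rw [xzc0, wz_const, xzz0]
  · show wderivZ (fun w => xz w 1) z = xzz z 1
    rw [xzc1, wz_const, xzz1]
  · show wderivZ (fun w => xz w 2) z = xzz z 2
    rw [xzc2, wz_ab _ _ (hd_invsq hz), xzz2]; field_simp; try ring
  · show wderivZ (fun w => xz w 3) z = xzz z 3
    rw [xzc3, wz_ab _ _ (hd_invsq hz), xzz3]; field_simp; try ring
  · show wderivZ (fun w => xz w 4) z = xzz z 4
    rw [xzc4, wz_ab _ _ (hd_id z), xzz4]; try ring
  · show wderivZ (fun w => xz w 5) z = xzz z 5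
    rw [xzc5, wz_ab _ _ (hd_id z), xzz5]; try ring

lemma wzz_exMin {z : ℂ} (hz : z ≠ 0) : wderivZ (wderivZ exMin) z = xzz z := by
  have hev : wderivZ exMin =ᶠ[nhds z] xz := by
    filter_upwards [isOpen_compl_singleton.mem_nhds (by simpa using hz : z ∈ ({0}ᶜ : Set ℂ))]
      with w hw
    exact wz_exMin hw
  rw [wderivZ_congr hev, wz_xz hz]

end explicitDerivs


section divForms

lemma dot_div {n : ℕ} (p q : Fin n → ℂ) (D E : ℂ) :
    dotC (fun i => p i / D) (fun i => q i / E) = dotC p q / (D * E) := by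
  simp only [dotC, ← Finset.sum_div, div_mul_div_comm]

noncomputable def pM (z : ℂ) : Fin 6 → ℂ :=
  ![3*I*z*((starRingEnd ℂ) z)*(z - (starRingEnd ℂ) z),
    -3*z*((starRingEnd ℂ) z)*(z + (starRingEnd ℂ) z),
    -6*I*(z - (starRingEnd ℂ) z),
    6*(z + (starRingEnd ℂ) z),
    2*I*z*((starRingEnd ℂ) z)*(z^2 - ((starRingEnd ℂ) z)^2),
    -2*z*((starRingEnd ℂ) z)*(z^2 + ((starRingEnd ℂ) z)^2)]

noncomputable def pZ (z : ℂ) : Fin 6 → ℂ :=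
  ![3*I*z^2, -3*z^2, -6*I, -6, 4*I*z^3, -4*z^3]

noncomputable def pB (z : ℂ) : Fin 6 → ℂ :=
  ![-3*I*((starRingEnd ℂ) z)^2, -3*((starRingEnd ℂ) z)^2, 6*I, -6,
    -4*I*((starRingEnd ℂ) z)^3, -4*((starRingEnd ℂ) z)^3]

noncomputable def pS (z : ℂ) : Fin 6 → ℂ :=
  ![0, 0, 9*I, 9, 3*I*z^3, -3*z^3]

lemma exMin_div {z : ℂ} (hz : z ≠ 0) :
    exMin z = fun i => pM z i / (12 * z * ((starRingEnd ℂ) z)) := by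
  have hc : (starRingEnd ℂ) z ≠ 0 := by simpa using hz
  funext i
  fin_cases i
  · show exMin z 0 = pM z 0 / _
    rw [eM0]; show _ = 3*I*z*((starRingEnd ℂ) z)*(z - (starRingEnd ℂ) z) / _
    field_simp; ring
  · show exMin z 1 = pM z 1 / _
    rw [eM1]; show _ = -3*z*((starRingEnd ℂ) z)*(z + (starRingEnd ℂ) z) / _
    field_simp; ring
  · show exMin z 2 = pM z 2 / _
    rw [eM2]; show _ = -6*I*(z - (starRingEnd ℂ) z) / _
    field_simp; ring
  · show exMin z 3 = pM z 3 / _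
    rw [eM3]; show _ = 6*(z + (starRingEnd ℂ) z) / _
    field_simp; ring
  · show exMin z 4 = pM z 4 / _
    rw [eM4]; show _ = 2*I*z*((starRingEnd ℂ) z)*(z^2 - ((starRingEnd ℂ) z)^2) / _
    field_simp; ring
  · show exMin z 5 = pM z 5 / _
    rw [eM5]; show _ = -2*z*((starRingEnd ℂ) z)*(z^2 + ((starRingEnd ℂ) z)^2) / _
    field_simp; ring

lemma xz_div {z : ℂ} (hz : z ≠ 0) : xz z = fun i => pZ z i / (12 * z^2) := by
  funext i
  fin_cases i
  · show xz z 0 = pZ z 0 / _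
    rw [xz0]; show _ = 3*I*z^2 / _; field_simp; ring
  · show xz z 1 = pZ z 1 / _
    rw [xz1]; show _ = -3*z^2 / _; field_simp; ring
  · show xz z 2 = pZ z 2 / _
    rw [xz2]; show _ = -6*I / _; field_simp; ring
  · show xz z 3 = pZ z 3 / _
    rw [xz3]; show _ = -6 / _; field_simp; ring
  · show xz z 4 = pZ z 4 / _
    rw [xz4]; show _ = 4*I*z^3 / _; field_simp; ring
  · show xz z 5 = pZ z 5 / _
    rw [xz5]; show _ = -4*z^3 / _; field_simp; ring

lemma xzbar_div {z : ℂ} (hz : z ≠ 0) :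
    xzbar z = fun i => pB z i / (12 * ((starRingEnd ℂ) z)^2) := by
  have hc : (starRingEnd ℂ) z ≠ 0 := by simpa using hz
  funext i
  fin_cases i
  · show xzbar z 0 = pB z 0 / _
    rw [xb0]; show _ = -3*I*((starRingEnd ℂ) z)^2 / _; field_simp; ring
  · show xzbar z 1 = pB z 1 / _
    rw [xb1]; show _ = -3*((starRingEnd ℂ) z)^2 / _; field_simp; ring
  · show xzbar z 2 = pB z 2 / _
    rw [xb2]; show _ = 6*I / _; field_simp; ring
  · show xzbar z 3 = pB z 3 / _
    rw [xb3]; show _ = -6 / _; field_simp; ring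
  · show xzbar z 4 = pB z 4 / _
    rw [xb4]; show _ = -4*I*((starRingEnd ℂ) z)^3 / _; field_simp; ring
  · show xzbar z 5 = pB z 5 / _
    rw [xb5]; show _ = -4*((starRingEnd ℂ) z)^3 / _; field_simp; ring

lemma xzz_div {z : ℂ} (hz : z ≠ 0) : xzz z = fun i => pS z i / (9 * z^3) := by
  funext i
  fin_cases i
  · show xzz z 0 = pS z 0 / _
    rw [xzz0]; show _ = 0 / _; simp
  · show xzz z 1 = pS z 1 / _
    rw [xzz1]; show _ = 0 / _; simp
  · show xzz z 2 = pS z 2 / _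
    rw [xzz2]; show _ = 9*I / _; field_simp
  · show xzz z 3 = pS z 3 / _
    rw [xzz3]; show _ = 9 / _; field_simp
  · show xzz z 4 = pS z 4 / _
    rw [xzz4]; show _ = 3*I*z^3 / _; field_simp; ring
  · show xzz z 5 = pS z 5 / _
    rw [xzz5]; show _ = -3*z^3 / _; field_simp; ring

lemma pM0 (z : ℂ) : pM z 0 = 3*I*z*((starRingEnd ℂ) z)*(z - (starRingEnd ℂ) z) := rfl
lemma pM1 (z : ℂ) : pM z 1 = -3*z*((starRingEnd ℂ) z)*(z + (starRingEnd ℂ) z) := rfl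
lemma pM2 (z : ℂ) : pM z 2 = -6*I*(z - (starRingEnd ℂ) z) := rfl
lemma pM3 (z : ℂ) : pM z 3 = 6*(z + (starRingEnd ℂ) z) := rfl
lemma pM4 (z : ℂ) : pM z 4 = 2*I*z*((starRingEnd ℂ) z)*(z^2 - ((starRingEnd ℂ) z)^2) := rfl
lemma pM5 (z : ℂ) : pM z 5 = -2*z*((starRingEnd ℂ) z)*(z^2 + ((starRingEnd ℂ) z)^2) := rfl
lemma pZ0 (z : ℂ) : pZ z 0 = 3*I*z^2 := rfl
lemma pZ1 (z : ℂ) : pZ z 1 = -3*z^2 := rfl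
lemma pZ2 (z : ℂ) : pZ z 2 = -6*I := rfl
lemma pZ3 (z : ℂ) : pZ z 3 = -6 := rfl
lemma pZ4 (z : ℂ) : pZ z 4 = 4*I*z^3 := rfl
lemma pZ5 (z : ℂ) : pZ z 5 = -4*z^3 := rfl
lemma pB0 (z : ℂ) : pB z 0 = -3*I*((starRingEnd ℂ) z)^2 := rfl
lemma pB1 (z : ℂ) : pB z 1 = -3*((starRingEnd ℂ) z)^2 := rfl
lemma pB2 (z : ℂ) : pB z 2 = 6*I := rfl
lemma pB3 (z : ℂ) : pB z 3 = -6 := rfl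
lemma pB4 (z : ℂ) : pB z 4 = -4*I*((starRingEnd ℂ) z)^3 := rfl
lemma pB5 (z : ℂ) : pB z 5 = -4*((starRingEnd ℂ) z)^3 := rfl
lemma pS0 (z : ℂ) : pS z 0 = 0 := rfl
lemma pS1 (z : ℂ) : pS z 1 = 0 := rfl
lemma pS2 (z : ℂ) : pS z 2 = 9*I := rfl
lemma pS3 (z : ℂ) : pS z 3 = 9 := rfl
lemma pS4 (z : ℂ) : pS z 4 = 3*I*z^3 := rfl
lemma pS5 (z : ℂ) : pS z 5 = -3*z^3 := rfl

end divForms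

set_option maxHeartbeats 2000000

/-- The identities (8.2) of Example 1: with r² = |z|²,
x·x = (1/r²)(1 + r⁴/4 + r⁶/9), x_z·x = −(1/(2zr²))(1 − r⁴/4 − 2r⁶/9),
x_zz·x = z̄²(1/9 + 1/r⁶), x_z·x_z̄ = (1/(2r⁴))(1 + r⁴/4 + 4r⁶/9). -/
theorem stmt_9 : ∀ z : ℂ, z ≠ 0 →
    dotC (exMin z) (exMin z)
      = (1 / (normSq z : ℂ)) * (1 + (normSq z : ℂ) ^ 2 / 4 + (normSq z : ℂ) ^ 3 / 9) ∧
    dotC (wderivZ exMin z) (exMin z)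
      = -(1 / (2 * z * (normSq z : ℂ)))
          * (1 - (normSq z : ℂ) ^ 2 / 4 - 2 * (normSq z : ℂ) ^ 3 / 9) ∧
    dotC (wderivZ (wderivZ exMin) z) (exMin z)
      = (starRingEnd ℂ z) ^ 2 * (1 / 9 + 1 / (normSq z : ℂ) ^ 3) ∧
    dotC (wderivZ exMin z) (wderivZbar exMin z)
      = (1 / (2 * (normSq z : ℂ) ^ 2))
          * (1 + (normSq z : ℂ) ^ 2 / 4 + 4 * (normSq z : ℂ) ^ 3 / 9) := by
  intro z hz
  have hc : (starRingEnd ℂ) z ≠ 0 := by simpa using hz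
  have hns : (normSq z : ℂ) = z * (starRingEnd ℂ) z := (Complex.mul_conj z).symm
  have hzc : z * (starRingEnd ℂ) z ≠ 0 := mul_ne_zero hz hc
  rw [wz_exMin hz, wzbar_exMin hz, wzz_exMin hz,
      exMin_div hz, xz_div hz, xzbar_div hz, xzz_div hz, dot_div, dot_div, dot_div, dot_div]
  refine ⟨?_, ?_, ?_, ?_⟩ <;>
  · simp only [dotC, Fin.sum_univ_six, hns,
      pM0, pM1, pM2, pM3, pM4, pM5, pZ0, pZ1, pZ2, pZ3, pZ4, pZ5,
      pB0, pB1, pB2, pB3, pB4, pB5, pS0, pS1, pS2, pS3, pS4, pS5]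
    field_simp [hz, hc, hzc]
    ring_nf
    simp only [Complex.I_sq]
    try ring
end

section
/- In ℂ⁵ with the ℂ-bilinear dot product, let E₁ = (1,i,0,0,0), E₂ = (0,0,1,i,0), e₅ = (0,0,0,0,1), and define the polynomial map Φ(z) = (1 − 20z³ − 80z⁶)E₁ + (z⁸/2)E̅₁ − (8z³ + 20z⁶ − 10z⁹)E₂ + z⁵E̅₂ + √30(z⁴ + 2z⁷)e₅, where E̅₁ = (1,−i,0,0,0), E̅₂ = (0,0,1,−i,0). Then Φ(z)·Φ(z) = 0 for all z ∈ ℂ. -/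
open Finset Complex

/-- In the null frame `E₁, E̅₁, E₂, E̅₂, e₅` the only nonzero pairings are `E₁·E̅₁ = E₂·E̅₂ = 2`
and `e₅·e₅ = 1`. -/
theorem dotC_self_frame (a b c d f : ℂ) :
    let v : Fin 5 → ℂ := a • ![1, I, 0, 0, 0] + b • ![1, -I, 0, 0, 0] - c • ![0, 0, 1, I, 0]
      + d • ![0, 0, 1, -I, 0] + f • ![0, 0, 0, 0, 1]
    dotC v v = 4 * a * b - 4 * c * d + f ^ 2 := by
  simp only [dotC, Fin.sum_univ_five, Pi.add_apply, Pi.sub_apply, Pi.smul_apply, smul_eq_mul,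
    Matrix.cons_val_zero, Matrix.cons_val_one, Matrix.cons_val_two, Matrix.cons_val_three,
    Matrix.cons_val_four, Matrix.head_cons, Matrix.tail_cons]
  linear_combination (a ^ 2 + b ^ 2 - 2 * a * b + c ^ 2 + d ^ 2 + 2 * c * d) * I_sq

theorem frame_coefficients_isotropic (z : ℂ) :
    4 * (1 - 20 * z ^ 3 - 80 * z ^ 6) * (z ^ 8 / 2) - 4 * (8 * z ^ 3 + 20 * z ^ 6 - 10 * z ^ 9) * z ^ 5
      + ((Real.sqrt 30 : ℂ) * (z ^ 4 + 2 * z ^ 7)) ^ 2 = 0 := by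
  have hsqrt : (Real.sqrt 30 : ℂ) ^ 2 = 30 := by
    norm_cast
    exact Real.sq_sqrt (by norm_num)
  rw [mul_pow, hsqrt]
  ring

/-- The vector polynomial Φ of Example 3 (equation (8.17)) is isotropic:
Φ(z)·Φ(z) = 0 for all z ∈ ℂ. -/
theorem stmt_13 :
    let E₁ : Fin 5 → ℂ := ![1, I, 0, 0, 0]
    let E₂ : Fin 5 → ℂ := ![0, 0, 1, I, 0]
    let E₁b : Fin 5 → ℂ := ![1, -I, 0, 0, 0]
    let E₂b : Fin 5 → ℂ := ![0, 0, 1, -I, 0]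
    let e₅ : Fin 5 → ℂ := ![0, 0, 0, 0, 1]
    let Φ : ℂ → Fin 5 → ℂ := fun z =>
      (1 - 20 * z ^ 3 - 80 * z ^ 6) • E₁ + (z ^ 8 / 2) • E₁b
        - (8 * z ^ 3 + 20 * z ^ 6 - 10 * z ^ 9) • E₂ + (z ^ 5) • E₂b
        + ((Real.sqrt 30 : ℂ) * (z ^ 4 + 2 * z ^ 7)) • e₅
    ∀ z : ℂ, dotC (Φ z) (Φ z) = 0 := by
  intro _ _ _ _ _ _ z
  exact (dotC_self_frame _ _ _ _ _).trans (frame_coefficients_isotropic z)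
end

section
/- Let x̂ : ℂ → ℝ⁶ be defined by x̂ = (1/(1 + r⁴/4 + 4r⁶/9)) · ( (1 + r⁶/9)(i/2)(z − z̄), (1 + r⁶/9)(−1/2)(z + z̄), (r²/4 + r⁴/3)·i(z̄ − z), (r²/4 + r⁴/3)(z̄ + z), (1 − r⁴/12)(i/2)(z² − z̄²), (1 − r⁴/12)(−1/2)(z² + z̄²) ), with r² = |z|², and let x be the map of Example 1. Then x̂ coincides with the pedal surface of x: x̂ = x − ((x·x_z̄)/(x_z·x_z̄))·x_z − ((x·x_z)/(x_z·x_z̄))·x_z̄ for all z ∈ ℂ∖{0}. -/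
/-!
Writing `x = φ + conj φ` with `φ = (iz/4, -z/4, i/(2z), 1/(2z), iz²/6, -z²/6)` holomorphic, the
Wirtinger derivatives are `x_z = φ'` and `x_z̄ = conj φ'`, so every dot product in the pedal formula
is an explicit rational function of `z` and `z̄`. Both pedal coefficients have the denominator
`36 + 9|z|⁴ + 16|z|⁶ > 0`, and the pedal formula reduces to a polynomial identity in `z` and `z̄`.
-/

open Finset Complex

open ComplexConjugate

section Wirtinger

variable {f : ℂ → ℂ} {f' z : ℂ}

lemma HasDerivAt.hasFDerivAt_add_conj (hf : HasDerivAt f f' z) :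
    HasFDerivAt (fun w => f w + conj (f w))
      ((ContinuousLinearMap.smulRight (1 : ℂ →L[ℂ] ℂ) f').restrictScalars ℝ +
        conjCLE.toContinuousLinearMap.comp
          ((ContinuousLinearMap.smulRight (1 : ℂ →L[ℂ] ℂ) f').restrictScalars ℝ)) z :=
  (hf.hasFDerivAt.restrictScalars ℝ).add
    (conjCLE.toContinuousLinearMap.hasFDerivAt.comp z (hf.hasFDerivAt.restrictScalars ℝ))

lemma HasDerivAt.fderiv_add_conj_apply (hf : HasDerivAt f f' z) (v : ℂ) :
    fderiv ℝ (fun w => f w + conj (f w)) z v = f' * v + conj (f' * v) := by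
  rw [hf.hasFDerivAt_add_conj.fderiv]
  simp [mul_comm]

lemma HasDerivAt.wderivZ_add_conj (hf : HasDerivAt f f' z) :
    wderivZ (fun w => f w + conj (f w)) z = f' := by
  rw [wderivZ, hf.fderiv_add_conj_apply, hf.fderiv_add_conj_apply]
  simp only [map_mul, conj_I, map_one, smul_eq_mul]
  linear_combination (conj f' - f') / 2 * I_sq

lemma HasDerivAt.wderivZbar_add_conj (hf : HasDerivAt f f' z) :
    wderivZbar (fun w => f w + conj (f w)) z = conj f' := by
  rw [wderivZbar, hf.fderiv_add_conj_apply, hf.fderiv_add_conj_apply]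
  simp only [map_mul, conj_I, map_one, smul_eq_mul]
  linear_combination (f' - conj f') / 2 * I_sq

end Wirtinger

section Pi

variable {ι E : Type*} [Fintype ι] [NormedAddCommGroup E] [NormedSpace ℂ E]
  {F : ι → ℂ → E} {z : ℂ}

lemma wderivZ_pi (h : ∀ i, DifferentiableAt ℝ (F i) z) :
    wderivZ (fun w i => F i w) z = fun i => wderivZ (F i) z := by
  ext i
  simp [wderivZ, fderiv_pi h]

lemma wderivZbar_pi (h : ∀ i, DifferentiableAt ℝ (F i) z) :
    wderivZbar (fun w i => F i w) z = fun i => wderivZbar (F i) z := by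
  ext i
  simp [wderivZbar, fderiv_pi h]

end Pi

section Example

variable {z : ℂ}

noncomputable def exMinPotential : Fin 6 → ℂ → ℂ :=
  ![fun z => I / 4 * z, fun z => -(1 / 4) * z, fun z => I / 2 * z⁻¹, fun z => 1 / 2 * z⁻¹,
    fun z => I / 6 * z ^ 2, fun z => -(1 / 6) * z ^ 2]

noncomputable def exMinPotentialDeriv (z : ℂ) : Fin 6 → ℂ :=
  ![I / 4, -(1 / 4), -(I / 2) * (z ^ 2)⁻¹, -(1 / 2) * (z ^ 2)⁻¹, I / 3 * z, -(1 / 3) * z]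

lemma exMin_eq_add_conj :
    exMin = fun z i => exMinPotential i z + conj (exMinPotential i z) := by
  ext z i
  fin_cases i <;>
    simp only [exMin, exMinPotential, Fin.reduceFinMk, Matrix.cons_val, map_mul, map_div₀,
      map_inv₀, map_neg, map_pow, map_ofNat, map_one, conj_I] <;>
    ring

lemma hasDerivAt_exMinPotential (hz : z ≠ 0) (i : Fin 6) :
    HasDerivAt (exMinPotential i) (exMinPotentialDeriv z i) z := by
  fin_cases i <;>
    simp only [exMinPotential, exMinPotentialDeriv, Fin.reduceFinMk, Matrix.cons_val]
  · exact ((hasDerivAt_id z).const_mul _).congr_deriv (mul_one _)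
  · exact ((hasDerivAt_id z).const_mul _).congr_deriv (mul_one _)
  · exact ((hasDerivAt_inv hz).const_mul _).congr_deriv (by ring)
  · exact ((hasDerivAt_inv hz).const_mul _).congr_deriv (by ring)
  · exact ((hasDerivAt_pow 2 z).const_mul _).congr_deriv (by push_cast; ring)
  · exact ((hasDerivAt_pow 2 z).const_mul _).congr_deriv (by push_cast; ring)

lemma differentiableAt_exMinPotential_add_conj (hz : z ≠ 0) (i : Fin 6) :
    DifferentiableAt ℝ (fun w => exMinPotential i w + conj (exMinPotential i w)) z :=
  (hasDerivAt_exMinPotential hz i).hasFDerivAt_add_conj.differentiableAt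

lemma wderivZ_exMin (hz : z ≠ 0) : wderivZ exMin z = exMinPotentialDeriv z := by
  rw [exMin_eq_add_conj, wderivZ_pi (differentiableAt_exMinPotential_add_conj hz)]
  exact funext fun i => (hasDerivAt_exMinPotential hz i).wderivZ_add_conj

lemma wderivZbar_exMin (hz : z ≠ 0) :
    wderivZbar exMin z = fun i => conj (exMinPotentialDeriv z i) := by
  rw [exMin_eq_add_conj, wderivZbar_pi (differentiableAt_exMinPotential_add_conj hz)]
  exact funext fun i => (hasDerivAt_exMinPotential hz i).wderivZbar_add_conj

lemma dotC_wderivZ_wderivZbar_exMin (hz : z ≠ 0) :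
    dotC (wderivZ exMin z) (wderivZbar exMin z) =
      (36 + 9 * (normSq z : ℂ) ^ 2 + 16 * (normSq z : ℂ) ^ 3) / (72 * (normSq z : ℂ) ^ 2) := by
  have hz' : conj z ≠ 0 := by simpa using hz
  rw [wderivZ_exMin hz, wderivZbar_exMin hz]
  simp only [dotC, Fin.sum_univ_six, exMinPotentialDeriv, Matrix.cons_val, map_mul, map_div₀,
    map_inv₀, map_neg, map_pow, map_ofNat, map_one, conj_I, ← mul_conj]
  field_simp
  ring_nf
  rw [I_sq]
  ring

lemma dotC_exMin_wderivZbar_exMin (hz : z ≠ 0) :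
    dotC (exMin z) (wderivZbar exMin z) =
      (8 * (normSq z : ℂ) ^ 3 + 9 * (normSq z : ℂ) ^ 2 - 36) / (72 * z * conj z ^ 2) := by
  have hz' : conj z ≠ 0 := by simpa using hz
  rw [wderivZbar_exMin hz]
  simp only [dotC, Fin.sum_univ_six, exMin, exMinPotentialDeriv, Matrix.cons_val, map_mul,
    map_div₀, map_inv₀, map_neg, map_pow, map_ofNat, map_one, conj_I, ← mul_conj]
  field_simp
  ring_nf
  rw [I_sq]
  ring

lemma dotC_exMin_wderivZ_exMin (hz : z ≠ 0) :
    dotC (exMin z) (wderivZ exMin z) =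
      (8 * (normSq z : ℂ) ^ 3 + 9 * (normSq z : ℂ) ^ 2 - 36) / (72 * z ^ 2 * conj z) := by
  have hz' : conj z ≠ 0 := by simpa using hz
  rw [wderivZ_exMin hz]
  simp only [dotC, Fin.sum_univ_six, exMin, exMinPotentialDeriv, Matrix.cons_val, ← mul_conj]
  field_simp
  ring_nf
  rw [I_sq]
  ring

lemma exMin_pedal_coeff_wderivZ (hz : z ≠ 0) :
    dotC (exMin z) (wderivZbar exMin z) / dotC (wderivZ exMin z) (wderivZbar exMin z) =
      z * (8 * (normSq z : ℂ) ^ 3 + 9 * (normSq z : ℂ) ^ 2 - 36) /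
        (36 + 9 * (normSq z : ℂ) ^ 2 + 16 * (normSq z : ℂ) ^ 3) := by
  have hz' : conj z ≠ 0 := by simpa using hz
  rw [dotC_exMin_wderivZbar_exMin hz, dotC_wderivZ_wderivZbar_exMin hz, ← mul_conj]
  field_simp

lemma exMin_pedal_coeff_wderivZbar (hz : z ≠ 0) :
    dotC (exMin z) (wderivZ exMin z) / dotC (wderivZ exMin z) (wderivZbar exMin z) =
      conj z * (8 * (normSq z : ℂ) ^ 3 + 9 * (normSq z : ℂ) ^ 2 - 36) /
        (36 + 9 * (normSq z : ℂ) ^ 2 + 16 * (normSq z : ℂ) ^ 3) := by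
  have hz' : conj z ≠ 0 := by simpa using hz
  rw [dotC_exMin_wderivZ_exMin hz, dotC_wderivZ_wderivZbar_exMin hz, ← mul_conj]
  field_simp

lemma exMin_pedal_denom_ne_zero (z : ℂ) :
    36 + 9 * (normSq z : ℂ) ^ 2 + 16 * (normSq z : ℂ) ^ 3 ≠ 0 := by
  have := normSq_nonneg z
  exact_mod_cast (by positivity : (0 : ℝ) < 36 + 9 * normSq z ^ 2 + 16 * normSq z ^ 3).ne'

end Example

/-- The explicit surface x̂ of Example 1 is the pedal surface of x with pedal
point the origin: x̂ = x − ((x·x_z̄)/(x_z·x_z̄))x_z − ((x·x_z)/(x_z·x_z̄))x_z̄. -/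
theorem stmt_17 :
    let xhat : ℂ → Fin 6 → ℂ := fun z =>
      (1 / (1 + (normSq z : ℂ) ^ 2 / 4 + 4 * (normSq z : ℂ) ^ 3 / 9)) •
      ![ (1 + (normSq z : ℂ) ^ 3 / 9) * (I / 2) * (z - (starRingEnd ℂ) z),
         (1 + (normSq z : ℂ) ^ 3 / 9) * (-1 / 2) * (z + (starRingEnd ℂ) z),
         ((normSq z : ℂ) / 4 + (normSq z : ℂ) ^ 2 / 3) * I * ((starRingEnd ℂ) z - z),
         ((normSq z : ℂ) / 4 + (normSq z : ℂ) ^ 2 / 3) * ((starRingEnd ℂ) z + z),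
         (1 - (normSq z : ℂ) ^ 2 / 12) * (I / 2) * (z ^ 2 - (starRingEnd ℂ z) ^ 2),
         (1 - (normSq z : ℂ) ^ 2 / 12) * (-1 / 2) * (z ^ 2 + (starRingEnd ℂ z) ^ 2) ]
    ∀ z : ℂ, z ≠ 0 →
      xhat z = exMin z
        - (dotC (exMin z) (wderivZbar exMin z)
            / dotC (wderivZ exMin z) (wderivZbar exMin z)) • wderivZ exMin z
        - (dotC (exMin z) (wderivZ exMin z)
            / dotC (wderivZ exMin z) (wderivZbar exMin z)) • wderivZbar exMin z := by
  intro xhat z hz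
  have hN := exMin_pedal_denom_ne_zero z
  have hscale : 1 / (1 + (normSq z : ℂ) ^ 2 / 4 + 4 * (normSq z : ℂ) ^ 3 / 9) =
      36 / (36 + 9 * (normSq z : ℂ) ^ 2 + 16 * (normSq z : ℂ) ^ 3) := by
    field_simp
    ring
  rw [exMin_pedal_coeff_wderivZ hz, exMin_pedal_coeff_wderivZbar hz, wderivZ_exMin hz,
    wderivZbar_exMin hz]
  simp only [xhat, hscale]
  set N := 36 + 9 * (normSq z : ℂ) ^ 2 + 16 * (normSq z : ℂ) ^ 3 with hNdef
  have hz' : conj z ≠ 0 := by simpa using hz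
  ext i
  fin_cases i <;>
    simp only [Pi.sub_apply, Pi.smul_apply, smul_eq_mul, exMin, exMinPotentialDeriv,
      Fin.reduceFinMk, Matrix.cons_val, map_mul, map_div₀, map_inv₀, map_neg, map_pow, map_ofNat,
      map_one, conj_I] <;>
    field_simp <;>
    rw [hNdef, ← mul_conj] <;>
    ring
end
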